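/- For every y ∈ ℝ², the limit C(y) = lim_{n→∞} β^{-n} 𝖡(y) 𝖡(R y) ⋯ 𝖡(R^{n-1} y) of the rescaled Fourier matrix cocycle exists (as a 3×3 complex matrix); the resulting matrix function C is continuous on ℝ², and C(0) = P, where P is the rank-one projector with entries P_{ij} = v_i u_j for v = (2 − β^2, β^2 − β, β − 1)^T and u = ((3 + β + 7β^2)/23)(1, β, β^2). -/

import Mathlib

/-!
Write `𝖡(y) = M + (e^{2πi y₁} - 1) E` with `E` a matrix unit. Then
`β⁻ⁿ 𝖡(y) ⋯ 𝖡(Rⁿ⁻¹ y) = ∏ₖ (A + Fₖ)` with `A = β⁻¹ M` and `‖Fₖ‖ = O(‖y‖ |α|ᵏ)`, because `R`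
contracts at rate `|α| < 1`. As `β, α, ᾱ` are simple roots of `x³ - x - 1`, Lagrange
interpolation gives `Mⁿ = βⁿ P + αⁿ P_α + ᾱⁿ P_ᾱ`, so `Aⁿ → P`. Duhamel's formula
`Sₙ = Aⁿ + ∑ₖ Sₖ Fₖ Aⁿ⁻¹⁻ᵏ`, a Grönwall bound on the partial products `Sₖ` and dominated
convergence give `Sₙ → P + ∑ₖ Sₖ Fₖ P`. The bounds are locally uniform in `y`, so the limit is
continuous, and at `y = 0` every `Fₖ` vanishes.
-/

open Matrix

noncomputable def fourierMatrix (y : Fin 2 → ℝ) : Matrix (Fin 3) (Fin 3) ℂ :=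
  !![0, 0, 1;
     1, 0, Complex.exp (2 * Real.pi * Complex.I * (y 0 : ℂ));
     0, 1, 0]

/-- The matrix `R = Qᵀ`, where `Q` represents multiplication by `α` on `ℂ ≅ ℝ²`. -/
noncomputable def internalMatrix (α : ℂ) : Matrix (Fin 2) (Fin 2) ℝ :=
  !![α.re, α.im;
     -α.im, α.re]

open Filter Topology Finset Polynomial ComplexConjugate

section LagrangeDecomposition

variable {𝕜 𝔸 ι : Type*} [DecidableEq ι] {s : Finset ι} {i : ι}

section Field

variable [Field 𝕜] [Ring 𝔸] [Algebra 𝕜 𝔸] {v : ι → 𝕜} {M : 𝔸}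

theorem mul_aeval_lagrangeBasis (hM : aeval M (Lagrange.nodal s v) = 0) (hi : i ∈ s) :
    M * aeval M (Lagrange.basis s v i) = v i • aeval M (Lagrange.basis s v i) := by
  have hfactor : (X - C (v i)) * Lagrange.basis s v i =
      C (Lagrange.nodalWeight s v i) * Lagrange.nodal s v := by
    rw [Lagrange.basis_eq_prod_sub_inv_mul_nodal_div hi, ← Lagrange.nodal_erase_eq_nodal_div hi,
      Lagrange.nodal_eq_mul_nodal_erase hi]
    ring
  have := congrArg (aeval M) hfactor
  simp only [map_mul, map_sub, aeval_X, aeval_C, hM, mul_zero, sub_mul,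
    Algebra.algebraMap_eq_smul_one, smul_mul_assoc, one_mul] at this
  exact sub_eq_zero.mp this

theorem pow_eq_sum_smul_aeval_lagrangeBasis (hvs : Set.InjOn v s) (hs : s.Nonempty)
    (hM : aeval M (Lagrange.nodal s v) = 0) (n : ℕ) :
    M ^ n = ∑ i ∈ s, v i ^ n • aeval M (Lagrange.basis s v i) := by
  have hpow : ∀ i ∈ s, M ^ n * aeval M (Lagrange.basis s v i) =
      v i ^ n • aeval M (Lagrange.basis s v i) := by
    intro i hi
    induction n with
    | zero => simp
    | succ n ih =>
      rw [pow_succ', mul_assoc, ih, mul_smul_comm, mul_aeval_lagrangeBasis hM hi, smul_smul,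
        ← pow_succ]
  calc M ^ n = M ^ n * aeval M (∑ i ∈ s, Lagrange.basis s v i) := by
        rw [Lagrange.sum_basis hvs hs, map_one, mul_one]
    _ = _ := by rw [map_sum, Finset.mul_sum]; exact Finset.sum_congr rfl hpow

end Field

theorem tendsto_pow_inv_smul_of_forall_norm_lt [NormedField 𝕜] [Ring 𝔸] [Algebra 𝕜 𝔸]
    [TopologicalSpace 𝔸] [ContinuousAdd 𝔸] [ContinuousSMul 𝕜 𝔸] {v : ι → 𝕜} {M : 𝔸}
    (hvs : Set.InjOn v s) (hM : aeval M (Lagrange.nodal s v) = 0) (hi : i ∈ s) (hvi : v i ≠ 0)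
    (hdom : ∀ j ∈ s, j ≠ i → ‖v j‖ < ‖v i‖) :
    Tendsto (fun n => ((v i)⁻¹ • M) ^ n) atTop (𝓝 (aeval M (Lagrange.basis s v i))) := by
  have hterm : ∀ j ∈ s, Tendsto (fun n => (v j / v i) ^ n • aeval M (Lagrange.basis s v j))
      atTop (𝓝 (if j = i then aeval M (Lagrange.basis s v j) else 0)) := by
    intro j hj
    split_ifs with hji
    · subst hji
      simp [div_self hvi, tendsto_const_nhds]
    · rw [← zero_smul 𝕜 (aeval M (Lagrange.basis s v j))]
      refine (tendsto_pow_atTop_nhds_zero_of_norm_lt_one ?_).smul_const _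
      rw [norm_div, div_lt_one (norm_pos_iff.mpr hvi)]
      exact hdom j hj hji
  have hsum := tendsto_finsetSum s hterm
  rw [Finset.sum_ite_eq' s i, if_pos hi] at hsum
  refine hsum.congr fun n => ?_
  rw [_root_.smul_pow, pow_eq_sum_smul_aeval_lagrangeBasis hvs ⟨i, hi⟩ hM, Finset.smul_sum]
  refine Finset.sum_congr rfl fun j _ => ?_
  rw [smul_smul, div_pow, div_eq_inv_mul, inv_pow]

end LagrangeDecomposition

section PerturbedProduct

variable {𝔸 : Type*}

def perturbedProd [Ring 𝔸] (A : 𝔸) (F : ℕ → 𝔸) (n : ℕ) : 𝔸 :=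
  ((List.range n).map fun k => A + F k).prod

noncomputable def perturbedProdLimit [Ring 𝔸] [TopologicalSpace 𝔸] (A P : 𝔸) (F : ℕ → 𝔸) : 𝔸 :=
  P + ∑' k, perturbedProd A F k * F k * P

section Ring

variable [Ring 𝔸] (A : 𝔸) (F : ℕ → 𝔸)

@[simp]
theorem perturbedProd_zero : perturbedProd A F 0 = 1 := rfl

theorem perturbedProd_succ (n : ℕ) :
    perturbedProd A F (n + 1) = perturbedProd A F n * (A + F n) := by
  simp [perturbedProd, List.range_succ]

theorem perturbedProd_eq_pow_add_sum (n : ℕ) :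
    perturbedProd A F n =
      A ^ n + ∑ k ∈ range n, perturbedProd A F k * F k * A ^ (n - 1 - k) := by
  induction n with
  | zero => simp
  | succ n ih =>
    rw [perturbedProd_succ, mul_add, Finset.sum_range_succ, Nat.add_sub_cancel, Nat.sub_self,
      pow_zero, mul_one, ← add_assoc]
    congr 1
    nth_rw 1 [ih]
    rw [add_mul, ← pow_succ, Finset.sum_mul]
    congr 1
    refine Finset.sum_congr rfl fun k hk => ?_
    rw [mul_assoc _ (A ^ _), ← pow_succ, show n - 1 - k + 1 = n - k by
      have := Finset.mem_range.mp hk; omega]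

@[simp]
theorem perturbedProdLimit_zero [TopologicalSpace 𝔸] (P : 𝔸) : perturbedProdLimit A P 0 = P := by
  simp [perturbedProdLimit]

end Ring

section Normed

variable [NormedRing 𝔸] {A P : 𝔸} {F : ℕ → 𝔸} {K : ℝ} {u : ℕ → ℝ}

/-- Bounding `S n * A ^ m` for all `m` at once makes the induction close. -/
theorem norm_perturbedProd_mul_pow_le (hK : ∀ m, ‖A ^ m‖ ≤ K) (hF : ∀ k, ‖F k‖ ≤ u k)
    (n m : ℕ) : ‖perturbedProd A F n * A ^ m‖ ≤ K * Real.exp (K * ∑ k ∈ range n, u k) := by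
  have hK0 : 0 ≤ K := (norm_nonneg _).trans (hK 0)
  induction n generalizing m with
  | zero => simpa using hK m
  | succ n ih =>
    set G := K * Real.exp (K * ∑ k ∈ range n, u k)
    have hu : 0 ≤ u n := (norm_nonneg _).trans (hF n)
    calc ‖perturbedProd A F (n + 1) * A ^ m‖
        = ‖perturbedProd A F n * A ^ (m + 1) + perturbedProd A F n * A ^ 0 * F n * A ^ m‖ := by
          rw [perturbedProd_succ, pow_succ', pow_zero, mul_one]; noncomm_ring
      _ ≤ G + G * u n * K := by
          refine (norm_add_le _ _).trans (add_le_add (ih _) ?_)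
          refine (norm_mul_le _ _).trans (mul_le_mul ?_ (hK m) (norm_nonneg _) (by positivity))
          exact (norm_mul_le _ _).trans (mul_le_mul (ih 0) (hF n) (norm_nonneg _) (by positivity))
      _ = G * (1 + K * u n) := by ring
      _ ≤ G * Real.exp (K * u n) := by
          gcongr; linarith [Real.add_one_le_exp (K * u n)]
      _ = K * Real.exp (K * ∑ k ∈ range (n + 1), u k) := by
          rw [mul_assoc, ← Real.exp_add, Finset.sum_range_succ, mul_add]

theorem norm_perturbedProd_le (hK : ∀ m, ‖A ^ m‖ ≤ K) (hF : ∀ k, ‖F k‖ ≤ u k)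
    (hu : Summable u) (n : ℕ) : ‖perturbedProd A F n‖ ≤ K * Real.exp (K * ∑' k, u k) := by
  have hK0 : 0 ≤ K := (norm_nonneg _).trans (hK 0)
  calc ‖perturbedProd A F n‖ = ‖perturbedProd A F n * A ^ 0‖ := by rw [pow_zero, mul_one]
    _ ≤ _ := norm_perturbedProd_mul_pow_le hK hF n 0
    _ ≤ _ := by
        gcongr
        exact hu.sum_le_tsum _ fun k _ => (norm_nonneg _).trans (hF k)

theorem norm_perturbedProd_mul_mul_le (hK : ∀ m, ‖A ^ m‖ ≤ K) (hF : ∀ k, ‖F k‖ ≤ u k)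
    (hu : Summable u) (k : ℕ) (B : 𝔸) :
    ‖perturbedProd A F k * F k * B‖ ≤ K * Real.exp (K * ∑' k, u k) * u k * ‖B‖ := by
  have hS := norm_perturbedProd_le hK hF hu
  refine (norm_mul₃_le).trans (mul_le_mul_of_nonneg_right ?_ (norm_nonneg _))
  exact mul_le_mul (hS k) (hF k) (norm_nonneg _) ((norm_nonneg _).trans (hS 0))

theorem exists_norm_pow_le (hA : Tendsto (A ^ ·) atTop (𝓝 P)) : ∃ K, ∀ m, ‖A ^ m‖ ≤ K := by
  obtain ⟨K, hK⟩ := hA.norm.bddAbove_range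
  exact ⟨K, fun m => hK ⟨m, rfl⟩⟩

theorem continuous_perturbedProd {X : Type*} [TopologicalSpace X] {F : X → ℕ → 𝔸}
    (hFc : ∀ k, Continuous (F · k)) (n : ℕ) : Continuous fun x => perturbedProd A (F x) n := by
  induction n with
  | zero => exact continuous_const
  | succ n ih =>
    simp only [perturbedProd_succ]
    exact ih.mul (continuous_const.add (hFc n))

variable [CompleteSpace 𝔸]

theorem tendsto_perturbedProd (hA : Tendsto (A ^ ·) atTop (𝓝 P)) (hF : ∀ k, ‖F k‖ ≤ u k)
    (hu : Summable u) :
    Tendsto (perturbedProd A F) atTop (𝓝 (perturbedProdLimit A P F)) := by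
  obtain ⟨K, hK⟩ := exists_norm_pow_le hA
  let f : ℕ → ℕ → 𝔸 := fun n k =>
    if k < n then perturbedProd A F k * F k * A ^ (n - 1 - k) else 0
  have hsum : ∀ n, ∑' k, f n k = ∑ k ∈ range n, perturbedProd A F k * F k * A ^ (n - 1 - k) := by
    intro n
    rw [tsum_eq_sum (s := range n) fun k hk => if_neg (by simpa using hk)]
    exact Finset.sum_congr rfl fun k hk => if_pos (Finset.mem_range.mp hk)
  have hlim : ∀ k, Tendsto (f · k) atTop (𝓝 (perturbedProd A F k * F k * P)) := by
    intro k
    have hshift : Tendsto (fun n => A ^ (n - 1 - k)) atTop (𝓝 P) :=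
      hA.comp ((tendsto_sub_atTop_nat (k + 1)).congr fun n => by rw [Nat.sub_sub, Nat.add_comm])
    refine (hshift.const_mul _).congr' ?_
    filter_upwards [eventually_gt_atTop k] with n hn
    exact (if_pos hn).symm
  set G := K * Real.exp (K * ∑' k, u k)
  have hG0 : 0 ≤ G := (norm_nonneg _).trans (norm_perturbedProd_le hK hF hu 0)
  have hK0 : 0 ≤ K := (norm_nonneg _).trans (hK 0)
  have hu0 : ∀ k, 0 ≤ u k := fun k => (norm_nonneg _).trans (hF k)
  have hbound : ∀ n k, ‖f n k‖ ≤ G * u k * K := by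
    intro n k
    by_cases hkn : k < n
    · simp only [f, if_pos hkn]
      refine (norm_perturbedProd_mul_mul_le hK hF hu k _).trans ?_
      exact mul_le_mul_of_nonneg_left (hK _) (mul_nonneg hG0 (hu0 k))
    · simp only [f, if_neg hkn, norm_zero]
      exact mul_nonneg (mul_nonneg hG0 (hu0 k)) hK0
  have hT := tendsto_tsum_of_dominated_convergence ((hu.mul_left _).mul_right K) hlim
    (Eventually.of_forall hbound)
  refine (hA.add hT).congr fun n => ?_
  rw [hsum, ← perturbedProd_eq_pow_add_sum]

theorem continuous_perturbedProdLimit {X : Type*} [TopologicalSpace X] {F : X → ℕ → 𝔸}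
    (hA : Tendsto (A ^ ·) atTop (𝓝 P)) (hFc : ∀ k, Continuous (F · k))
    (hF : ∀ x₀, ∃ u : ℕ → ℝ, Summable u ∧ ∀ᶠ x in 𝓝 x₀, ∀ k, ‖F x k‖ ≤ u k) :
    Continuous fun x => perturbedProdLimit A P (F x) := by
  obtain ⟨K, hK⟩ := exists_norm_pow_le hA
  refine continuous_const.add (continuous_iff_continuousAt.mpr fun x₀ => ?_)
  obtain ⟨u, hu, hux⟩ := hF x₀
  obtain ⟨U, hUF, hUo, hx₀U⟩ := mem_nhds_iff.mp hux
  refine (continuousOn_tsum (fun k => ?_) ((hu.mul_left _).mul_right ‖P‖)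
    fun k x hx => norm_perturbedProd_mul_mul_le hK (hUF hx) hu k P).continuousAt
    (hUo.mem_nhds hx₀U)
  exact (((continuous_perturbedProd hFc k).mul (hFc k)).mul continuous_const).continuousOn

end Normed

end PerturbedProduct

def substitutionMatrix : Matrix (Fin 3) (Fin 3) ℂ := !![0, 0, 1; 1, 0, 1; 0, 1, 0]

theorem fourierMatrix_sub_substitutionMatrix (y : Fin 2 → ℝ) :
    fourierMatrix y - substitutionMatrix =
      (Complex.exp (2 * Real.pi * Complex.I * (y 0 : ℂ)) - 1) • Matrix.single 1 2 1 := by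
  ext i j
  fin_cases i <;> fin_cases j <;> simp [fourierMatrix, substitutionMatrix]

theorem aeval_substitutionMatrix : aeval substitutionMatrix (X ^ 3 - X - 1 : ℂ[X]) = 0 := by
  ext i j
  fin_cases i <;> fin_cases j <;> simp [substitutionMatrix, pow_succ]

theorem aeval_substitutionMatrix_quadratic (b : ℂ) :
    aeval substitutionMatrix (X ^ 2 + C b * X + (C b ^ 2 - 1)) =
      !![b ^ 2 - 1, 1, b; b, b ^ 2, 1 + b; 1, b, b ^ 2] := by
  ext i j
  fin_cases i <;> fin_cases j <;> simp [substitutionMatrix, sq, Algebra.algebraMap_eq_smul_one]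

theorem internalMatrix_mul (z w : ℂ) :
    internalMatrix z * internalMatrix w = internalMatrix (z * w) := by
  ext i j
  fin_cases i <;> fin_cases j <;> simp [internalMatrix, Matrix.mul_apply] <;> ring

theorem internalMatrix_pow (z : ℂ) (k : ℕ) : internalMatrix z ^ k = internalMatrix (z ^ k) := by
  induction k with
  | zero => ext i j; fin_cases i <;> fin_cases j <;> simp [internalMatrix]
  | succ k ih => rw [pow_succ, ih, internalMatrix_mul, ← pow_succ]

theorem abs_internalMatrix_mulVec_zero_le (z : ℂ) (y : Fin 2 → ℝ) :
    |(internalMatrix z *ᵥ y) 0| ≤ 2 * ‖z‖ * ‖y‖ := by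
  have h0 : |y 0| ≤ ‖y‖ := by simpa using norm_le_pi_norm y 0
  have h1 : |y 1| ≤ ‖y‖ := by simpa using norm_le_pi_norm y 1
  have hre := Complex.abs_re_le_norm z
  have him := Complex.abs_im_le_norm z
  simp only [internalMatrix, mulVec, dotProduct, Fin.sum_univ_two]
  simp
  calc |z.re * y 0 + z.im * y 1| ≤ |z.re| * |y 0| + |z.im| * |y 1| := by
        rw [← abs_mul, ← abs_mul]; exact abs_add_le _ _
    _ ≤ ‖z‖ * ‖y‖ + ‖z‖ * ‖y‖ := by gcongr
    _ = 2 * ‖z‖ * ‖y‖ := by ring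

section PlasticNumber

variable {β : ℝ} {α : ℂ}

theorem plastic_vieta (hβ : β ^ 3 = β + 1) (hα : α ^ 3 = α + 1) (hαim : 0 < α.im) :
    α ^ 2 + α * β + β ^ 2 = 1 ∧ conj α = -β - α := by
  have hb : (β : ℂ) ^ 3 = β + 1 := by exact_mod_cast hβ
  have hαc : conj α ^ 3 = conj α + 1 := by simpa using congrArg conj hα
  have quadratic : ∀ z : ℂ, z ^ 3 = z + 1 → z.im ≠ 0 → z ^ 2 + z * β + β ^ 2 = 1 := by
    intro z hz hzim
    have hzβ : z - β ≠ 0 := fun h => hzim (by simpa using congrArg Complex.im h)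
    have : (z - β) * (z ^ 2 + z * β + β ^ 2 - 1) = 0 := by linear_combination hz - hb
    linear_combination (mul_eq_zero.mp this).resolve_left hzβ
  have h1 := quadratic α hα hαim.ne'
  have h1c := quadratic (conj α) hαc (by simpa using hαim.ne')
  have hαα : conj α - α ≠ 0 := fun h => by
    have := congrArg Complex.im h
    simp at this
    linarith
  have : (conj α - α) * (conj α + α + β) = 0 := by linear_combination h1c - h1
  exact ⟨h1, by linear_combination (mul_eq_zero.mp this).resolve_left hαα⟩

theorem plastic_norm_lt_one (hβ : β ^ 3 = β + 1) (hβ1 : 1 < β) (hα : α ^ 3 = α + 1)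
    (hαim : 0 < α.im) : ‖α‖ < 1 := by
  obtain ⟨h1, hconj⟩ := plastic_vieta hβ hα hαim
  have hnormSq : (Complex.normSq α : ℂ) = β ^ 2 - 1 := by
    rw [← Complex.mul_conj, hconj]
    linear_combination -h1
  have hsq : ‖α‖ ^ 2 = β ^ 2 - 1 := by
    rw [Complex.sq_norm]; exact_mod_cast hnormSq
  have hlt : β ^ 2 - 1 < 1 := by nlinarith
  nlinarith [norm_nonneg α]

theorem nodal_plastic (hβ : β ^ 3 = β + 1) (hα : α ^ 3 = α + 1) (hαim : 0 < α.im) :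
    Lagrange.nodal univ ![(β : ℂ), α, conj α] = X ^ 3 - X - 1 := by
  obtain ⟨h1, hconj⟩ := plastic_vieta hβ hα hαim
  have h1C : C α ^ 2 + C α * C (β : ℂ) + C (β : ℂ) ^ 2 = 1 := by simpa using congrArg C h1
  have hbC : C (β : ℂ) ^ 3 = C (β : ℂ) + 1 := by
    simpa using congrArg C (show (β : ℂ) ^ 3 = β + 1 by exact_mod_cast hβ)
  simp only [Lagrange.nodal, Fin.prod_univ_three, hconj]
  simp
  linear_combination (C (β : ℂ) - X) * h1C - hbC

theorem lagrangeBasis_plastic (hβ : β ^ 3 = β + 1) (hα : α ^ 3 = α + 1) (hαim : 0 < α.im) :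
    Lagrange.basis univ ![(β : ℂ), α, conj α] 0 =
      C (3 * (β : ℂ) ^ 2 - 1)⁻¹ * (X ^ 2 + C (β : ℂ) * X + (C (β : ℂ) ^ 2 - 1)) := by
  have hfactor : (X ^ 3 - X - 1 : ℂ[X]) =
      (X - C (β : ℂ)) * (X ^ 2 + C (β : ℂ) * X + (C (β : ℂ) ^ 2 - 1)) := by
    have hbC : C (β : ℂ) ^ 3 = C (β : ℂ) + 1 := by
      simpa using congrArg C (show (β : ℂ) ^ 3 = β + 1 by exact_mod_cast hβ)
    linear_combination hbC
  rw [Lagrange.basis_eq_prod_sub_inv_mul_nodal_div (mem_univ 0),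
    Lagrange.nodalWeight_eq_eval_derivative_nodal (mem_univ 0), nodal_plastic hβ hα hαim]
  rw [hfactor, Matrix.cons_val_zero, mul_div_cancel_left₀ _ (X_sub_C_ne_zero _)]
  congr 3
  simp
  ring

theorem plastic_projector_eq (hβ : β ^ 3 = β + 1) (hβ1 : 1 < β) :
    (3 * (β : ℂ) ^ 2 - 1)⁻¹ •
      (!![(β : ℂ) ^ 2 - 1, 1, β; β, β ^ 2, 1 + β; 1, β, β ^ 2] : Matrix (Fin 3) (Fin 3) ℂ) =
      Matrix.of (fun i j : Fin 3 =>
        (((![2 - β ^ 2, β ^ 2 - β, β - 1]) i *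
          ((3 + β + 7 * β ^ 2) / 23 * (![1, β, β ^ 2]) j) : ℝ) : ℂ)) := by
  have hb : (β : ℂ) ^ 3 = β + 1 := by exact_mod_cast hβ
  have h3 : 3 * (β : ℂ) ^ 2 - 1 ≠ 0 := by
    exact_mod_cast (show 3 * β ^ 2 - 1 ≠ 0 by nlinarith)
  ext i j
  fin_cases i <;> fin_cases j <;> simp <;> field_simp <;> grind

theorem tendsto_inv_smul_substitutionMatrix_pow (hβ : β ^ 3 = β + 1) (hβ1 : 1 < β)
    (hα : α ^ 3 = α + 1) (hαim : 0 < α.im) :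
    Tendsto (fun n => ((β : ℂ)⁻¹ • substitutionMatrix) ^ n) atTop
      (𝓝 (Matrix.of (fun i j : Fin 3 =>
        (((![2 - β ^ 2, β ^ 2 - β, β - 1]) i *
          ((3 + β + 7 * β ^ 2) / 23 * (![1, β, β ^ 2]) j) : ℝ) : ℂ)))) := by
  have hα1 := plastic_norm_lt_one hβ hβ1 hα hαim
  have hinj : Function.Injective ![(β : ℂ), α, conj α] := by
    intro i j hij
    have := congrArg Complex.im hij
    fin_cases i <;> fin_cases j <;> simp at this ⊢ <;> linarith
  have hdom : ∀ j ∈ univ, j ≠ 0 → ‖![(β : ℂ), α, conj α] j‖ < ‖![(β : ℂ), α, conj α] 0‖ := by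
    intro j _ hj
    fin_cases j <;> simp_all [abs_of_pos (zero_lt_one.trans hβ1)] <;> linarith
  have h := tendsto_pow_inv_smul_of_forall_norm_lt hinj.injOn
    (by rw [nodal_plastic hβ hα hαim]; exact aeval_substitutionMatrix) (mem_univ 0)
    (by simpa using (zero_lt_one.trans hβ1).ne') hdom
  rwa [lagrangeBasis_plastic hβ hα hαim, map_mul, aeval_C, aeval_substitutionMatrix_quadratic,
    Algebra.algebraMap_eq_smul_one, smul_mul_assoc, one_mul, plastic_projector_eq hβ hβ1] at h

end PlasticNumber

noncomputable def cocyclePerturbation (β : ℝ) (α : ℂ) (y : Fin 2 → ℝ) (k : ℕ) :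
    Matrix (Fin 3) (Fin 3) ℂ :=
  (β : ℂ)⁻¹ • (fourierMatrix (internalMatrix α ^ k *ᵥ y) - substitutionMatrix)

theorem cocyclePerturbation_eq (β : ℝ) (α : ℂ) (y : Fin 2 → ℝ) (k : ℕ) :
    cocyclePerturbation β α y k =
      ((β : ℂ)⁻¹ * (Complex.exp (2 * Real.pi * Complex.I * ((internalMatrix α ^ k *ᵥ y) 0 : ℂ))
        - 1)) • Matrix.single 1 2 1 := by
  rw [cocyclePerturbation, fourierMatrix_sub_substitutionMatrix, smul_smul]

@[simp]
theorem cocyclePerturbation_zero (β : ℝ) (α : ℂ) : cocyclePerturbation β α 0 = 0 := by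
  ext k : 1
  simp [cocyclePerturbation_eq]

theorem inv_pow_smul_prod_fourierMatrix (β : ℝ) (α : ℂ) (y : Fin 2 → ℝ) (n : ℕ) :
    ((β : ℂ) ^ n)⁻¹ • ((List.range n).map
      (fun i => fourierMatrix (internalMatrix α ^ i *ᵥ y))).prod =
      perturbedProd ((β : ℂ)⁻¹ • substitutionMatrix) (cocyclePerturbation β α y) n := by
  induction n with
  | zero => simp
  | succ n ih =>
    rw [perturbedProd_succ, ← ih, cocyclePerturbation, ← smul_add, add_sub_cancel,
      List.range_succ, List.map_append, List.prod_append, List.map_singleton,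
      List.prod_singleton, smul_mul_smul_comm, pow_succ, mul_inv]

theorem continuous_cocyclePerturbation (β : ℝ) (α : ℂ) (k : ℕ) :
    Continuous fun y => cocyclePerturbation β α y k := by
  simp only [cocyclePerturbation_eq]
  fun_prop

section LinftyOpNorm

/- Matrices carry no global norm; any submultiplicative one will do, and this one induces the
entrywise topology. -/
attribute [local instance] Matrix.linftyOpNormedRing Matrix.linftyOpNormedAlgebra

variable {β : ℝ} {α : ℂ}

theorem exists_norm_cocyclePerturbation_le (hβ : 0 < β) :
    ∃ c ≥ 0, ∀ y k, ‖cocyclePerturbation β α y k‖ ≤ c * ‖y‖ * ‖α‖ ^ k := by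
  set E : Matrix (Fin 3) (Fin 3) ℂ := Matrix.single 1 2 1
  refine ⟨β⁻¹ * (4 * Real.pi) * ‖E‖, by positivity, fun y k => ?_⟩
  have hexp (t : ℝ) : ‖Complex.exp (2 * Real.pi * Complex.I * t) - 1‖ ≤ 2 * Real.pi * |t| := by
    have := Real.norm_exp_I_mul_ofReal_sub_one_le (x := 2 * Real.pi * t)
    rw [Real.norm_eq_abs, abs_mul, abs_of_pos Real.two_pi_pos] at this
    convert this using 4
    push_cast
    ring
  have ht : |(internalMatrix α ^ k *ᵥ y) 0| ≤ 2 * ‖α‖ ^ k * ‖y‖ := by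
    rw [internalMatrix_pow, ← norm_pow]
    exact abs_internalMatrix_mulVec_zero_le _ _
  rw [cocyclePerturbation_eq]
  refine (norm_smul_le _ _).trans ?_
  rw [norm_mul, norm_inv, Complex.norm_real, Real.norm_of_nonneg hβ.le]
  calc β⁻¹ * ‖Complex.exp (2 * Real.pi * Complex.I * ((internalMatrix α ^ k *ᵥ y) 0 : ℂ)) - 1‖
        * ‖E‖
      ≤ β⁻¹ * (2 * Real.pi * (2 * ‖α‖ ^ k * ‖y‖)) * ‖E‖ := by
        gcongr
        exact (hexp _).trans (by gcongr)
    _ = β⁻¹ * (4 * Real.pi) * ‖E‖ * ‖y‖ * ‖α‖ ^ k := by ring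

theorem exists_summable_norm_cocyclePerturbation_le (hβ : 0 < β) (hα : ‖α‖ < 1)
    (y₀ : Fin 2 → ℝ) : ∃ u : ℕ → ℝ, Summable u ∧
      ∀ᶠ y in 𝓝 y₀, ∀ k, ‖cocyclePerturbation β α y k‖ ≤ u k := by
  obtain ⟨c, hc0, hc⟩ := exists_norm_cocyclePerturbation_le (α := α) hβ
  refine ⟨fun k => c * (‖y₀‖ + 1) * ‖α‖ ^ k,
    (summable_geometric_of_lt_one (norm_nonneg _) hα).mul_left _, ?_⟩
  filter_upwards [(continuous_norm.tendsto y₀).eventually (gt_mem_nhds (lt_add_one ‖y₀‖))]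
    with y hy k
  exact (hc y k).trans (by gcongr)

variable {P : Matrix (Fin 3) (Fin 3) ℂ}

theorem tendsto_inv_pow_smul_prod_fourierMatrix (hβ : 0 < β) (hα : ‖α‖ < 1)
    (hA : Tendsto (fun n => ((β : ℂ)⁻¹ • substitutionMatrix) ^ n) atTop (𝓝 P))
    (y : Fin 2 → ℝ) :
    Tendsto (fun n => ((β : ℂ) ^ n)⁻¹ • ((List.range n).map
      (fun i => fourierMatrix (internalMatrix α ^ i *ᵥ y))).prod) atTop
      (𝓝 (perturbedProdLimit ((β : ℂ)⁻¹ • substitutionMatrix) P (cocyclePerturbation β α y))) := by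
  obtain ⟨u, hu, hF⟩ := exists_summable_norm_cocyclePerturbation_le hβ hα y
  simp only [inv_pow_smul_prod_fourierMatrix]
  exact tendsto_perturbedProd hA hF.self_of_nhds hu

theorem continuous_perturbedProdLimit_cocyclePerturbation (hβ : 0 < β) (hα : ‖α‖ < 1)
    (hA : Tendsto (fun n => ((β : ℂ)⁻¹ • substitutionMatrix) ^ n) atTop (𝓝 P)) :
    Continuous fun y =>
      perturbedProdLimit ((β : ℂ)⁻¹ • substitutionMatrix) P (cocyclePerturbation β α y) :=
  continuous_perturbedProdLimit hA (continuous_cocyclePerturbation β α)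
    (exists_summable_norm_cocyclePerturbation_le hβ hα)

end LinftyOpNorm

theorem cocycle_limit_general (β : ℝ) (hβ : β ^ 3 = β + 1) (hβ1 : 1 < β)
    (α : ℂ) (hα : α ^ 3 = α + 1) (hαim : 0 < α.im) :
    ∃ C : (Fin 2 → ℝ) → Matrix (Fin 3) (Fin 3) ℂ,
      Continuous C ∧
      (∀ y : Fin 2 → ℝ,
        Filter.Tendsto
          (fun n : ℕ => ((β : ℂ) ^ n)⁻¹ •
            ((List.range n).map
              (fun i => fourierMatrix ((internalMatrix α ^ i).mulVec y))).prod)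
          Filter.atTop (nhds (C y))) ∧
      C 0 = Matrix.of (fun i j : Fin 3 =>
        (((![2 - β ^ 2, β ^ 2 - β, β - 1]) i *
          ((3 + β + 7 * β ^ 2) / 23 * (![1, β, β ^ 2]) j) : ℝ) : ℂ)) := by
  have hβ0 : 0 < β := zero_lt_one.trans hβ1
  have hα1 := plastic_norm_lt_one hβ hβ1 hα hαim
  have hA := tendsto_inv_smul_substitutionMatrix_pow hβ hβ1 hα hαim
  exact ⟨fun y => perturbedProdLimit ((β : ℂ)⁻¹ • substitutionMatrix) _ (cocyclePerturbation β α y),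
    continuous_perturbedProdLimit_cocyclePerturbation hβ0 hα1 hA,
    tendsto_inv_pow_smul_prod_fourierMatrix hβ0 hα1 hA, by simp⟩

/-- For every `y ∈ ℝ²`, the rescaled cocycle `β⁻ⁿ 𝖡(y) 𝖡(Ry) ⋯ 𝖡(Rⁿ⁻¹y)` converges;
the limit function `C` is continuous and `C(0) = P`, the rank-one projector
`P i j = v i * u j` with `v = (2 - β², β² - β, β - 1)ᵀ` and
`u = ((3 + β + 7β²)/23)(1, β, β²)`. -/
theorem cocycle_limit (β : ℝ) (hβ : β ^ 3 = β + 1) (hβ1 : 1 < β) (hβ2 : β < 2)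
    (α : ℂ) (hα : α ^ 3 = α + 1) (hαim : 0 < α.im) :
    ∃ C : (Fin 2 → ℝ) → Matrix (Fin 3) (Fin 3) ℂ,
      Continuous C ∧
      (∀ y : Fin 2 → ℝ,
        Filter.Tendsto
          (fun n : ℕ => ((β : ℂ) ^ n)⁻¹ •
            ((List.range n).map
              (fun i => fourierMatrix ((internalMatrix α ^ i).mulVec y))).prod)
          Filter.atTop (nhds (C y))) ∧
      C 0 = Matrix.of (fun i j : Fin 3 =>
        (((![2 - β ^ 2, β ^ 2 - β, β - 1]) i *
          ((3 + β + 7 * β ^ 2) / 23 * (![1, β, β ^ 2]) j) : ℝ) : ℂ)) :=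
  cocycle_limit_general β hβ hβ1 α hα hαim
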